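/- Let P = (P_0, P_1, ..., P_{2^n - 1}) be a partition-sequence of {0,1}^n (the non-empty P_i form a partition of {0,1}^n) such that (|P_0|, |P_1|, ..., |P_{2^n-1}|) is a block-sequence. Define I_P : {0,1}^n → {0,1}^n to map the vectors X_0, X_1, ..., X_{2^n - 1} (in index order) respectively to X_0 repeated |P_0| times, then X_1 repeated |P_1| times, ..., then X_{2^n - 1} repeated |P_{2^n-1}| times. Then I_P is suffix-compatible: for every 1 ≤ k ≤ n, if two vectors X, X' agree in components k, k+1, ..., n, then I_P(X) and I_P(X') also agree in components k, k+1, ..., n. -/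

import Mathlib

/-- Index of a boolean vector: `φ(x) = x_1 + 2x_2 + ⋯ + 2^{n-1}x_n`. -/
def idx {n : ℕ} (x : Fin n → Fin 2) : ℕ := ∑ i, (x i : ℕ) * 2 ^ (i : ℕ)

/-- Cumulative sum of the sizes of the first `k` parts of a partition-sequence. -/
def csum {n : ℕ} (P : Fin (2 ^ n) → Finset (Fin n → Fin 2)) (k : ℕ) : ℕ :=
  ∑ l ∈ Finset.univ.filter (fun l : Fin (2 ^ n) => (l : ℕ) < k), (P l).card

lemma idx_succ {n : ℕ} (x : Fin (n+1) → Fin 2) :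
    idx x = (x 0 : ℕ) + 2 * idx (fun i => x i.succ) := by
  unfold idx
  rw [Fin.sum_univ_succ, Finset.mul_sum]
  simp [pow_succ]
  exact Finset.sum_congr rfl fun i _ => by ring

lemma idx_lt : ∀ {n : ℕ} (x : Fin n → Fin 2), idx x < 2 ^ n := by
  intro n
  induction n with
  | zero => intro x; simp [idx]
  | succ n ih =>
    intro x
    rw [idx_succ]
    have h1 := ih (fun i => x i.succ)
    have h2 := (x 0).isLt
    rw [pow_succ]
    omega

lemma idx_div_pow_mod : ∀ {n : ℕ} (x : Fin n → Fin 2) (j : Fin n),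
    idx x / 2 ^ (j : ℕ) % 2 = (x j : ℕ) := by
  intro n
  induction n with
  | zero => intro x j; exact absurd j.isLt (by omega)
  | succ n ih =>
    intro x j
    rw [idx_succ]
    induction j using Fin.cases with
    | zero =>
      have h2 := (x 0).isLt
      simp; omega
    | succ i =>
      have hx0 : (x 0 : ℕ) < 2 := (x 0).isLt
      have hdiv : ((x 0 : ℕ) + 2 * idx (fun i => x i.succ)) / 2 ^ ((i.succ : Fin (n+1)) : ℕ)
          = idx (fun i => x i.succ) / 2 ^ (i : ℕ) := by
        rw [Fin.val_succ, pow_succ, mul_comm ((2:ℕ)^(i:ℕ)) 2, ← Nat.div_div_eq_div_mul]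
        congr 1
        omega
      rw [hdiv, ih (fun i => x i.succ) i]

lemma csum_split {n : ℕ} (P : Fin (2 ^ n) → Finset (Fin n → Fin 2)) {a b : ℕ} (hab : a ≤ b) :
    csum P b = csum P a + ∑ l ∈ Finset.univ.filter
      (fun l : Fin (2 ^ n) => a ≤ (l : ℕ) ∧ (l : ℕ) < b), (P l).card := by
  unfold csum
  rw [← Finset.sum_union]
  · congr 1
    ext l
    simp
    omega
  · rw [Finset.disjoint_left]
    intro l hl hl'
    simp at hl hl'
    omega

lemma csum_mono {n : ℕ} (P : Fin (2 ^ n) → Finset (Fin n → Fin 2)) {a b : ℕ} (hab : a ≤ b) :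
    csum P a ≤ csum P b := by
  rw [csum_split P hab]
  omega

lemma idx_div_eq_of_agree {n k : ℕ} {x x' : Fin n → Fin 2}
    (h : ∀ j : Fin n, k ≤ (j : ℕ) → x j = x' j) :
    idx x / 2 ^ k = idx x' / 2 ^ k := by
  apply Nat.eq_of_testBit_eq
  intro i
  rw [Nat.testBit_eq_decide_div_mod_eq, Nat.testBit_eq_decide_div_mod_eq,
      Nat.div_div_eq_div_mul, Nat.div_div_eq_div_mul, ← pow_add]
  by_cases hki : k + i < n
  · rw [show idx x / 2 ^ (k + i) % 2 = (x ⟨k + i, hki⟩ : ℕ) from idx_div_pow_mod x ⟨k + i, hki⟩,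
        show idx x' / 2 ^ (k + i) % 2 = (x' ⟨k + i, hki⟩ : ℕ) from idx_div_pow_mod x' ⟨k + i, hki⟩,
        h ⟨k + i, hki⟩ (by simp)]
  · rw [Nat.div_eq_of_lt (lt_of_lt_of_le (idx_lt x) (Nat.pow_le_pow_right (by omega) (by omega))),
        Nat.div_eq_of_lt (lt_of_lt_of_le (idx_lt x') (Nat.pow_le_pow_right (by omega) (by omega)))]

lemma agree_of_idx_div_eq {n k : ℕ} {y y' : Fin n → Fin 2}
    (h : idx y / 2 ^ k = idx y' / 2 ^ k) :
    ∀ j : Fin n, k ≤ (j : ℕ) → y j = y' j := by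
  intro j hkj
  have h2 : idx y / 2 ^ (j : ℕ) = idx y' / 2 ^ (j : ℕ) := by
    have hp : (2 : ℕ) ^ (j : ℕ) = 2 ^ k * 2 ^ ((j : ℕ) - k) := by
      rw [← pow_add]; congr 1; omega
    rw [hp, ← Nat.div_div_eq_div_mul, ← Nat.div_div_eq_div_mul, h]
  have h3 := idx_div_pow_mod y j
  have h4 := idx_div_pow_mod y' j
  apply Fin.val_injective
  omega

lemma csum_dvd {n : ℕ} (P : Fin (2 ^ n) → Finset (Fin n → Fin 2)) (k : ℕ) (hk : k ≤ n)
    (hblock : ∀ i ≤ n, ∀ j < 2 ^ (n - i),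
      2 ^ i ∣ ∑ l ∈ Finset.univ.filter
        (fun l : Fin (2 ^ n) => j * 2 ^ i ≤ (l : ℕ) ∧ (l : ℕ) < (j + 1) * 2 ^ i),
        (P l).card)
    (m : ℕ) (hm : m ≤ 2 ^ (n - k)) : 2 ^ k ∣ csum P (m * 2 ^ k) := by
  induction m with
  | zero => simp [csum]
  | succ m ih =>
    rw [csum_split P (show m * 2 ^ k ≤ (m + 1) * 2 ^ k from
      Nat.mul_le_mul_right _ (by omega))]
    exact Nat.dvd_add (ih (by omega)) (hblock k hk m (by omega))


/-- If the size sequence of a partition-sequence `P` of `{0,1}^n` is a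
block-sequence, the monotone step mapping `I_P` is suffix-compatible: vectors
agreeing in components `≥ k` have images agreeing in components `≥ k`. -/
theorem blockseq_partition_suffix_compatible
    (n : ℕ) (P : Fin (2 ^ n) → Finset (Fin n → Fin 2))
    (hdisj : ∀ l l' : Fin (2 ^ n), l ≠ l' → Disjoint (P l) (P l'))
    (hcover : ∀ x : Fin n → Fin 2, ∃ l, x ∈ P l)
    (hblock : ∀ i ≤ n, ∀ j < 2 ^ (n - i),
      2 ^ i ∣ ∑ l ∈ Finset.univ.filter
        (fun l : Fin (2 ^ n) => j * 2 ^ i ≤ (l : ℕ) ∧ (l : ℕ) < (j + 1) * 2 ^ i),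
        (P l).card)
    (I : (Fin n → Fin 2) → (Fin n → Fin 2))
    (hI : ∀ x, csum P (idx (I x)) ≤ idx x ∧ idx x < csum P (idx (I x) + 1)) :
    ∀ (k : ℕ) (x x' : Fin n → Fin 2),
      (∀ j : Fin n, k ≤ (j : ℕ) → x j = x' j) →
      ∀ j : Fin n, k ≤ (j : ℕ) → I x j = I x' j := by
  intro k x x' hagree
  rcases le_or_gt n k with hk | hk
  · intro j hkj
    exact absurd j.isLt (by omega)
  have hkn : k ≤ n := le_of_lt hk
  have h2k : 0 < (2 : ℕ) ^ k := Nat.pow_pos (n := k) (by omega)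
  have key : ∀ y y' : Fin n → Fin 2, idx y / 2 ^ k = idx y' / 2 ^ k →
      ¬ (idx (I y) / 2 ^ k < idx (I y') / 2 ^ k) := by
    intro y y' hyy hlt
    set a := idx (I y) with ha
    set a' := idx (I y') with ha'
    set m := a' / 2 ^ k with hmdef
    have hma' : m * 2 ^ k ≤ a' := Nat.div_mul_le_self a' (2 ^ k)
    have ham : a + 1 ≤ m * 2 ^ k := by
      have : a < m * 2 ^ k := (Nat.div_lt_iff_lt_mul h2k).mp hlt
      omega
    have ha'n : a' < 2 ^ n := idx_lt _
    have hm2 : m < 2 ^ (n - k) := by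
      by_contra hcon
      push_neg at hcon
      have h1 : 2 ^ (n - k) * 2 ^ k ≤ m * 2 ^ k := Nat.mul_le_mul_right _ hcon
      rw [← pow_add] at h1
      have h2 : n - k + k = n := by omega
      rw [h2] at h1
      omega
    obtain ⟨t, ht⟩ := csum_dvd P k hkn hblock m (le_of_lt hm2)
    rw [mul_comm ((2:ℕ) ^ k) t] at ht
    have h1 := hI y
    have h2 := hI y'
    have hc1 : idx y < csum P (m * 2 ^ k) := lt_of_lt_of_le h1.2 (csum_mono P ham)
    have hc2 : csum P (m * 2 ^ k) ≤ idx y' := le_trans (csum_mono P hma') h2.1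
    have ht1 : idx y / 2 ^ k < t := (Nat.div_lt_iff_lt_mul h2k).mpr (by omega)
    have ht2 : t ≤ idx y' / 2 ^ k := (Nat.le_div_iff_mul_le h2k).mpr (by omega)
    omega
  have hxx : idx x / 2 ^ k = idx x' / 2 ^ k := idx_div_eq_of_agree hagree
  have heq : idx (I x) / 2 ^ k = idx (I x') / 2 ^ k := by
    have h1 := key x x' hxx
    have h2 := key x' x hxx.symm
    omega
  exact agree_of_idx_div_eq heq
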